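/- Let (V, E, s, t) be a finite graph with cycle space Z₁ ⊆ C₁ = (E → ZMod 2). Let W be a finite-dimensional vector space over ZMod 2 equipped with a nondegenerate alternating bilinear form B, let Q be the set of quadratic refinements of B, and let p : Z₁ → W be any map (playing the role of the homology class map of an embedding in a genus-g surface, card W = 2^{2g}). Then in the polynomial ring ℤ[X_e : e ∈ E] one has the averaging identity Σ_{q ∈ Q} ( Σ_{β ∈ W} χ(q β) ) · ( Σ_{ξ ∈ Z₁} χ(q (p ξ)) · x(|ξ|) ) = (card W) · Σ_{ξ ∈ Z₁} x(|ξ|). (Equivalently: 2^g · Z^I = Σ_{q∈Q} (−1)^{Arf(q)} Z_q, the final step in the paper's proof of Theorem 1, where Z^I = Σ_{ξ∈Z₁} x(|ξ|) is the Ising partition function.) -/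

import Mathlib

open scoped BigOperators

/-- The boundary map `∂ : C₁ → C₀` of a finite graph `(V, E, s, t)`:
the `ZMod 2`-linear map sending the indicator chain of an edge `e` to
(indicator of `s e`) + (indicator of `t e`). -/
def bdry {V E : Type*} [Fintype E] [DecidableEq V]
    (s t : E → V) (ξ : E → ZMod 2) : V → ZMod 2 :=
  fun v => ∑ e, ξ e * ((if s e = v then 1 else 0) + (if t e = v then 1 else 0))

/-- The support of a 1-chain: the set of edges where it equals 1. -/
def chainSupp {E : Type*} [Fintype E] (ξ : E → ZMod 2) : Finset E :=
  Finset.univ.filter (fun e => ξ e = 1)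

/-- The sign character `χ : ZMod 2 → ℤ`, `χ 0 = 1`, `χ 1 = -1`. -/
def chi : ZMod 2 → ℤ := fun x => if x = 0 then 1 else -1

/-- The monomial `x(S) = ∏_{e ∈ S} X_e` in `ℤ[X_e : e ∈ E]`. -/
noncomputable def xmon {E : Type*} (S : Finset E) : MvPolynomial E ℤ :=
  ∏ e ∈ S, MvPolynomial.X e

/-! The quadratic refinements of `B` form a torsor under the additive functionals `W → ZMod 2`,
and the torsor is nonempty: an alternating form is `B' - B'ᵀ` for the strictly upper triangular
part `B'` of its Gram matrix, so in characteristic 2 the map `x ↦ B' x x` refines it. Writing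
`q = q₀ + f`, the sum `Σ_q χ(q β) χ(q w)` becomes `χ(q₀ β) χ(q₀ w) Σ_f χ(f (β + w))`, and this
character sum vanishes unless `β = w` (shift by a functional that is `1` at `β + w`), where it
counts the functionals, `|W|` of them. Summing over `β` and exchanging with the sum over cycles
gives the identity. -/

theorem chi_add (a b : ZMod 2) : chi (a + b) = chi a * chi b := by
  revert a b; decide

theorem chi_mul_self (a : ZMod 2) : chi a * chi a = 1 := by
  revert a; decide

namespace LinearMap.BilinForm

variable {R M : Type*} [CommRing R] [AddCommGroup M] [Module R M]

theorem exists_eq_sub_flip_of_isAlt {ι : Type*} [Fintype ι] [LinearOrder ι]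
    (b : Module.Basis ι R M) {B : LinearMap.BilinForm R M} (hB : B.IsAlt) :
    ∃ B' : LinearMap.BilinForm R M, B = B' - B'.flip := by
  refine ⟨Matrix.toLinearMap₂ b b <| .of fun i j => if i < j then B (b i) (b j) else 0, ?_⟩
  refine LinearMap.ext_basis b b fun i j => ?_
  simp only [LinearMap.sub_apply, flip_apply, Matrix.toLinearMap₂_apply_basis, Matrix.of_apply]
  rcases lt_trichotomy i j with h | rfl | h
  · simp [h, h.not_gt]
  · simp [hB (b i)]
  · simp [h, h.not_gt, ← LinearMap.IsAlt.neg hB (b i) (b j)]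

theorem exists_quadraticRefinement_of_isAlt {K : Type*} [Field K] [CharP K 2] [Module K M]
    [FiniteDimensional K M] {B : LinearMap.BilinForm K M} (hB : B.IsAlt) :
    ∃ q : M → K, ∀ x y, q (x + y) = q x + q y + B x y := by
  obtain ⟨B', rfl⟩ := exists_eq_sub_flip_of_isAlt (Module.finBasis K M) hB
  refine ⟨fun x => B' x x, fun x y => ?_⟩
  simp only [map_add, LinearMap.add_apply, LinearMap.sub_apply, flip_apply, CharTwo.sub_eq_add]
  ring

end LinearMap.BilinForm

open Finset

section ZModTwo

variable {W : Type*} [AddCommGroup W] [Fintype W] [DecidableEq W]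

variable (W) in
def additiveFunctionals : Finset (W → ZMod 2) :=
  univ.filter fun f => ∀ x y : W, f (x + y) = f x + f y

def quadraticRefinements (B : W → W → ZMod 2) : Finset (W → ZMod 2) :=
  univ.filter fun q => ∀ x y : W, q (x + y) = q x + q y + B x y

theorem mem_additiveFunctionals {f : W → ZMod 2} :
    f ∈ additiveFunctionals W ↔ ∀ x y : W, f (x + y) = f x + f y := by
  simp [additiveFunctionals]

theorem mem_quadraticRefinements {B : W → W → ZMod 2} {q : W → ZMod 2} :
    q ∈ quadraticRefinements B ↔ ∀ x y : W, q (x + y) = q x + q y + B x y := by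
  simp [quadraticRefinements]

theorem sum_quadraticRefinements_eq_sum_additiveFunctionals {M : Type*} [AddCommMonoid M]
    {B : W → W → ZMod 2} {q₀ : W → ZMod 2} (hq₀ : q₀ ∈ quadraticRefinements B)
    (F : (W → ZMod 2) → M) :
    ∑ q ∈ quadraticRefinements B, F q = ∑ f ∈ additiveFunctionals W, F (q₀ + f) := by
  rw [mem_quadraticRefinements] at hq₀
  refine sum_nbij' (· - q₀) (q₀ + ·) (fun q hq => ?_) (fun f hf => ?_)
    (fun q _ => add_sub_cancel q₀ q) (fun f _ => add_sub_cancel_left q₀ f)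
    (fun q _ => by rw [add_sub_cancel])
  · rw [mem_quadraticRefinements] at hq
    rw [mem_additiveFunctionals]
    intro x y
    simp only [Pi.sub_apply, hq, hq₀]
    ring
  · rw [mem_additiveFunctionals] at hf
    rw [mem_quadraticRefinements]
    intro x y
    simp only [Pi.add_apply, hf, hq₀]
    ring

variable [Module (ZMod 2) W]

def additiveFunctionalsEquivDual : additiveFunctionals W ≃ Module.Dual (ZMod 2) W where
  toFun f := (AddMonoidHom.mk' f.1 (mem_additiveFunctionals.1 f.2)).toZModLinearMap 2
  invFun φ := ⟨φ, mem_additiveFunctionals.2 φ.map_add⟩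
  left_inv _ := rfl
  right_inv _ := rfl

theorem card_additiveFunctionals : #(additiveFunctionals W) = Fintype.card W := by
  rw [← Nat.card_eq_finsetCard, ← Nat.card_eq_fintype_card,
    Nat.card_congr additiveFunctionalsEquivDual,
    Nat.card_congr (Module.finBasis (ZMod 2) W).toDualEquiv.toEquiv]

theorem exists_mem_additiveFunctionals_apply_eq_one {v : W} (hv : v ≠ 0) :
    ∃ f ∈ additiveFunctionals W, f v = 1 := by
  obtain ⟨φ, hφ⟩ := not_forall.1 (mt (Module.forall_dual_apply_eq_zero_iff (ZMod 2) v).1 hv)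
  exact ⟨φ, mem_additiveFunctionals.2 φ.map_add, Fin.eq_one_of_ne_zero _ hφ⟩

theorem sum_additiveFunctionals_chi (v : W) :
    ∑ f ∈ additiveFunctionals W, chi (f v) = if v = 0 then (Fintype.card W : ℤ) else 0 := by
  split_ifs with hv
  · have hchi (f) (hf : f ∈ additiveFunctionals W) : chi (f v) = 1 := by
      have hf0 : f 0 = 0 := (AddMonoidHom.mk' f (mem_additiveFunctionals.1 hf)).map_zero
      rw [hv, hf0]
      rfl
    rw [sum_congr rfl hchi, sum_const, card_additiveFunctionals, nsmul_one]
  · obtain ⟨f₀, hf₀, hv₀⟩ := exists_mem_additiveFunctionals_apply_eq_one hv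
    refine sum_involution (fun f _ => f + f₀) (fun f _ => ?_) (fun f _ _ h => ?_)
      (fun f hf => ?_) (fun f _ => by rw [add_assoc, ZModModule.add_self, add_zero])
    · rw [Pi.add_apply, hv₀, chi_add, show chi 1 = -1 from rfl]
      ring
    · simpa [hv₀] using congrFun h v
    · rw [mem_additiveFunctionals] at hf hf₀ ⊢
      intro x y
      simp only [Pi.add_apply, hf, hf₀]
      ring

theorem sum_quadraticRefinements_chi_mul_chi {B : W → W → ZMod 2} {q₀ : W → ZMod 2}
    (hq₀ : q₀ ∈ quadraticRefinements B) (β w : W) :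
    ∑ q ∈ quadraticRefinements B, chi (q β) * chi (q w) =
      if β = w then (Fintype.card W : ℤ) else 0 := by
  have hsplit (f) (hf : f ∈ additiveFunctionals W) :
      chi ((q₀ + f) β) * chi ((q₀ + f) w) = chi (q₀ β) * chi (q₀ w) * chi (f (β + w)) := by
    rw [mem_additiveFunctionals.1 hf, Pi.add_apply, Pi.add_apply, chi_add, chi_add, chi_add]
    ring
  rw [sum_quadraticRefinements_eq_sum_additiveFunctionals hq₀, sum_congr rfl hsplit,
    ← mul_sum, sum_additiveFunctionals_chi]
  simp only [← ZModModule.sub_eq_add, sub_eq_zero]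
  split_ifs with h
  · rw [h, chi_mul_self, one_mul]
  · rw [mul_zero]

theorem sum_quadraticRefinements_sum_chi_mul_chi {B : W → W → ZMod 2} {q₀ : W → ZMod 2}
    (hq₀ : q₀ ∈ quadraticRefinements B) (w : W) :
    ∑ q ∈ quadraticRefinements B, ∑ β, chi (q β) * chi (q w) = Fintype.card W := by
  rw [sum_comm]
  simp [sum_quadraticRefinements_chi_mul_chi hq₀]

theorem quadraticRefinements_nonempty {B : W → W → ZMod 2}
    (hB₁ : ∀ x y z : W, B (x + y) z = B x z + B y z)
    (hB₂ : ∀ x y z : W, B z (x + y) = B z x + B z y)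
    (hBalt : ∀ x : W, B x x = 0) :
    (quadraticRefinements B).Nonempty := by
  let B' : LinearMap.BilinForm (ZMod 2) W := AddMonoidHom.toZModLinearMap 2 <|
    AddMonoidHom.mk' (fun x => (AddMonoidHom.mk' (B x) fun y z => hB₂ y z x).toZModLinearMap 2)
      fun x y => LinearMap.ext fun z => hB₁ x y z
  obtain ⟨q₀, hq₀⟩ := LinearMap.BilinForm.exists_quadraticRefinement_of_isAlt (B := B') hBalt
  exact ⟨q₀, mem_quadraticRefinements.2 hq₀⟩

end ZModTwo

theorem averaging_identity_general
    {V E W : Type*} [Fintype V] [Fintype E] [DecidableEq V] [DecidableEq E]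
    [AddCommGroup W] [Module (ZMod 2) W] [Fintype W] [DecidableEq W]
    (s t : E → V)
    (B : W → W → ZMod 2)
    (hB₁ : ∀ x y z : W, B (x + y) z = B x z + B y z)
    (hB₂ : ∀ x y z : W, B z (x + y) = B z x + B z y)
    (hBalt : ∀ x : W, B x x = 0)
    (p : (E → ZMod 2) → W) :
    (∑ q ∈ Finset.univ.filter
        (fun q : W → ZMod 2 => ∀ x y : W, q (x + y) = q x + q y + B x y),
      ((∑ β : W, chi (q β) : ℤ) : MvPolynomial E ℤ) *
        ∑ ξ ∈ Finset.univ.filter (fun ξ : E → ZMod 2 => bdry s t ξ = 0),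
          (chi (q (p ξ)) : MvPolynomial E ℤ) * xmon (chainSupp ξ)) =
    ((Fintype.card W : ℤ) : MvPolynomial E ℤ) *
      ∑ ξ ∈ Finset.univ.filter (fun ξ : E → ZMod 2 => bdry s t ξ = 0),
        xmon (chainSupp ξ) := by
  obtain ⟨q₀, hq₀⟩ := quadraticRefinements_nonempty hB₁ hB₂ hBalt
  change ∑ q ∈ quadraticRefinements B, _ = _
  simp only [mul_sum]
  rw [sum_comm]
  refine sum_congr rfl fun ξ _ => ?_
  rw [← sum_quadraticRefinements_sum_chi_mul_chi hq₀ (p ξ)]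
  push_cast
  simp only [sum_mul, mul_assoc]

theorem averaging_identity
    {V E W : Type*} [Fintype V] [Fintype E] [DecidableEq V] [DecidableEq E]
    [AddCommGroup W] [Module (ZMod 2) W] [Fintype W] [DecidableEq W]
    (s t : E → V)
    (B : W → W → ZMod 2)
    (hB₁ : ∀ x y z : W, B (x + y) z = B x z + B y z)
    (hB₂ : ∀ x y z : W, B z (x + y) = B z x + B z y)
    (hBalt : ∀ x : W, B x x = 0)
    (hBnd : ∀ x : W, (∀ y : W, B x y = 0) → x = 0)
    (p : (E → ZMod 2) → W) :
    (∑ q ∈ Finset.univ.filter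
        (fun q : W → ZMod 2 => ∀ x y : W, q (x + y) = q x + q y + B x y),
      ((∑ β : W, chi (q β) : ℤ) : MvPolynomial E ℤ) *
        ∑ ξ ∈ Finset.univ.filter (fun ξ : E → ZMod 2 => bdry s t ξ = 0),
          (chi (q (p ξ)) : MvPolynomial E ℤ) * xmon (chainSupp ξ)) =
    ((Fintype.card W : ℤ) : MvPolynomial E ℤ) *
      ∑ ξ ∈ Finset.univ.filter (fun ξ : E → ZMod 2 => bdry s t ξ = 0),
        xmon (chainSupp ξ) :=
  averaging_identity_general s t B hB₁ hB₂ hBalt p
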